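/- arXiv:1407.1288 — 6 statements merged into one kernel-verified Lean document; each statement's English description precedes it below -/
import Mathlib

section
/- Let M_n(K) carry the elementary G-grading induced by pairwise distinct elements (g_1,...,g_n). If a, b, c are homogeneous elements of M_n(K) with deg(a) = deg(b) = h and deg(c) = h^{-1} for some h in G, then a c b = b c a. -/
/-! For homogeneous `a, b` of degree `h` and `c` of degree `h⁻¹`, a nonzero summand
`a i j * c j k * b k l` of `(a * c * b) i l` forces `g k = g i` and then `g l = g j`, so by
injectivity of `g` the only surviving summand is `a i j * c j i * b i j`, which is symmetric
in `a` and `b`. -/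

/-- Homogeneous component of degree `h` of the elementary `G`-grading of `Mₙ(K)`
induced by `g : Fin n → G`. -/
def elemComp (K : Type*) [Field K] {G : Type*} [Group G] {n : ℕ} (g : Fin n → G) (h : G) :
    Submodule K (Matrix (Fin n) (Fin n) K) :=
  Submodule.span K {M | ∃ i j : Fin n, (g i)⁻¹ * g j = h ∧ M = Matrix.single i j 1}

namespace elemComp

variable {K : Type*} [Field K] {G : Type*} [Group G] {n : ℕ} {g : Fin n → G} {h : G}

theorem degree_eq_of_apply_ne_zero {a : Matrix (Fin n) (Fin n) K} (ha : a ∈ elemComp K g h)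
    {i j : Fin n} (hij : a i j ≠ 0) : (g i)⁻¹ * g j = h := by
  contrapose! hij
  induction ha using Submodule.span_induction with
  | mem M hM =>
    obtain ⟨i', j', hdeg, rfl⟩ := hM
    rw [Matrix.single_apply_of_ne]
    rintro ⟨rfl, rfl⟩
    exact hij hdeg
  | zero => rfl
  | add x y _ _ hx hy => simp [hx, hy]
  | smul r x _ hx => simp [hx]

theorem eq_and_eq_of_apply_mul_apply_mul_apply_ne_zero (hg : Function.Injective g)
    {a b c : Matrix (Fin n) (Fin n) K} (ha : a ∈ elemComp K g h) (hc : c ∈ elemComp K g h⁻¹)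
    (hb : b ∈ elemComp K g h) {i j k l : Fin n} (hne : a i j * c j k * b k l ≠ 0) :
    k = i ∧ l = j := by
  obtain ⟨⟨hij, hjk⟩, hkl⟩ := mul_ne_zero_iff.mp hne |>.imp_left mul_ne_zero_iff.mp
  have h₁ := degree_eq_of_apply_ne_zero ha hij
  have h₂ := degree_eq_of_apply_ne_zero hc hjk
  have h₃ := degree_eq_of_apply_ne_zero hb hkl
  have hki : k = i := hg <| by
    calc g k = g i * ((g i)⁻¹ * g j) * ((g j)⁻¹ * g k) := by group
      _ = g i := by rw [h₁, h₂, mul_inv_cancel_right]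
  subst hki
  exact ⟨rfl, hg (mul_left_cancel (h₃.trans h₁.symm))⟩

end elemComp

/-- for pairwise distinct `gᵢ`, if `a, b` are homogeneous of degree `h` and
`c` is homogeneous of degree `h⁻¹`, then `a * c * b = b * c * a`. -/
theorem acb_eq_bca_of_homogeneous
    (K : Type*) [Field K] {G : Type*} [Group G] {n : ℕ} (g : Fin n → G)
    (hg : Function.Injective g) (h : G)
    (a b c : Matrix (Fin n) (Fin n) K)
    (ha : a ∈ elemComp K g h) (hb : b ∈ elemComp K g h) (hc : c ∈ elemComp K g h⁻¹) :
    a * c * b = b * c * a := by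
  ext i l
  simp only [Matrix.mul_apply, Finset.sum_mul]
  refine Finset.sum_congr rfl fun k _ => Finset.sum_congr rfl fun j _ => ?_
  by_cases hkl : k = i ∧ l = j
  · obtain ⟨rfl, rfl⟩ := hkl
    ring
  · rw [not_imp_comm.mp (elemComp.eq_and_eq_of_apply_mul_apply_mul_apply_ne_zero hg ha hc hb) hkl,
      not_imp_comm.mp (elemComp.eq_and_eq_of_apply_mul_apply_mul_apply_ne_zero hg hb hc ha) hkl]
end

section
/- With notation as for generic matrices: a product of generic matrices A_{i_1}^{(h_1)} ... A_{i_q}^{(h_q)} is zero if and only if the set L_{(h_1,...,h_q)} = {k in {1,...,n} : g_k h_1...h_a in {g_1,...,g_n} for all a in {1,...,q}} is empty. In particular, whether a monomial x_{i_1}...x_{i_q} with variable degrees (h_1,...,h_q) vanishes under all substitutions by generic matrices depends only on the sequence (h_1,...,h_q) and not on the indices i_1,...,i_q. -/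
/-!
Since `g` is injective, row `k` of `A_i^{(h)}` has at most one nonzero entry, `y^k_{h,i}` in the
column `m` with `g m = g k * h`. Multiplying on the left by `A_i^{(h)}` therefore replaces row `k`
by `y^k_{h,i}` times row `m` of the right factor, or by zero if there is no such `m`. As the
variables are nonzero in the domain `K[Y]`, row `k` of a product of generic matrices is nonzero
exactly when all the partial products `g k * h₁ ⋯ h_a` stay in the image of `g`.
-/

/-- The generic matrix `A_i^{(h)}` over `Ω = K[Y]`: its `(k, l)` entry is `y^k_{h,i}` if
`g l = g k * h`, and `0` otherwise. -/
noncomputable def genMat {K : Type*} [Field K] {G : Type*} [Group G] [DecidableEq G] {n : ℕ}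
    (g : Fin n → G) (h : G) (i : ℕ) :
    Matrix (Fin n) (Fin n) (MvPolynomial (G × ℕ × Fin n) K) :=
  Matrix.of fun k l => if g k * h = g l then MvPolynomial.X (h, i, k) else 0

open MvPolynomial

def PrefixesInRange {G : Type*} [Group G] {n : ℕ} (g : Fin n → G) (hs : List G) (k : Fin n) :
    Prop :=
  ∀ a < hs.length, ∃ l, g k * (hs.take (a + 1)).prod = g l

section

variable {G : Type*} [Group G] {n : ℕ} {g : Fin n → G}

theorem prefixesInRange_nil (k : Fin n) : PrefixesInRange g [] k := by
  simp [PrefixesInRange]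

theorem prefixesInRange_cons {h : G} {t : List G} {k : Fin n} :
    PrefixesInRange g (h :: t) k ↔ ∃ m, g k * h = g m ∧ PrefixesInRange g t m := by
  constructor
  · intro H
    obtain ⟨m, hm⟩ := H 0 (by simp)
    rw [List.take_succ_cons, List.take_zero, List.prod_singleton] at hm
    refine ⟨m, hm, fun a ha => ?_⟩
    obtain ⟨l, hl⟩ := H (a + 1) (by simpa using ha)
    exact ⟨l, by rwa [← hm, mul_assoc, ← List.prod_cons, ← List.take_succ_cons]⟩
  · rintro ⟨m, hm, H⟩ (_ | a) ha
    · exact ⟨m, by simpa using hm⟩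
    · obtain ⟨l, hl⟩ := H a (by simpa using ha)
      exact ⟨l, by rw [List.take_succ_cons, List.prod_cons, ← mul_assoc, hm, hl]⟩

end

section

variable {K : Type*} [Field K] {G : Type*} [Group G] [DecidableEq G] {n : ℕ} {g : Fin n → G}

theorem genMat_mul_apply_of_mul_eq (hg : Function.Injective g) {h : G} {i : ℕ} {k m : Fin n}
    (hm : g k * h = g m) (M : Matrix (Fin n) (Fin n) (MvPolynomial (G × ℕ × Fin n) K))
    (l : Fin n) : (genMat (K := K) g h i * M) k l = X (h, i, k) * M m l := by
  rw [Matrix.mul_apply, Finset.sum_eq_single m]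
  · simp [genMat, hm]
  · intro m' _ hm'
    simp [genMat, hm, hg.ne hm'.symm]
  · simp

theorem genMat_mul_apply_of_forall_ne {h : G} {i : ℕ} {k : Fin n} (hk : ∀ m, g k * h ≠ g m)
    (M : Matrix (Fin n) (Fin n) (MvPolynomial (G × ℕ × Fin n) K)) (l : Fin n) :
    (genMat (K := K) g h i * M) k l = 0 := by
  simp [Matrix.mul_apply, genMat, hk]

theorem list_prod_genMat_row_eq_zero_iff (hg : Function.Injective g) (L : List (G × ℕ))
    (k : Fin n) :
    (∀ l, (L.map fun p => genMat (K := K) g p.1 p.2).prod k l = 0) ↔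
      ¬ PrefixesInRange g (L.map Prod.fst) k := by
  induction L generalizing k with
  | nil =>
    simp only [List.map_nil, List.prod_nil, prefixesInRange_nil, not_true_eq_false,
      iff_false, not_forall]
    exact ⟨k, by simp⟩
  | cons p t ih =>
    simp only [List.map_cons, List.prod_cons, prefixesInRange_cons]
    by_cases hk : ∃ m, g k * p.1 = g m
    · obtain ⟨m, hm⟩ := hk
      have hunique : ∀ m', g k * p.1 = g m' ↔ m' = m :=
        fun m' => ⟨fun e => hg (e.symm.trans hm), fun e => e ▸ hm⟩
      simp only [genMat_mul_apply_of_mul_eq hg hm, mul_eq_zero, X_ne_zero, false_or, hunique,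
        exists_eq_left]
      exact ih m
    · push Not at hk
      simp [genMat_mul_apply_of_forall_ne hk, hk]

theorem list_prod_genMat_eq_zero_iff (hg : Function.Injective g) (L : List (G × ℕ)) :
    (L.map fun p => genMat (K := K) g p.1 p.2).prod = 0 ↔
      ∀ k, ¬ PrefixesInRange g (L.map Prod.fst) k := by
  simp only [← Matrix.ext_iff, Matrix.zero_apply, list_prod_genMat_row_eq_zero_iff hg]

end

theorem prod_genMat_eq_zero_iff_general
    (K : Type*) [Field K] {G : Type*} [Group G] [DecidableEq G] {n q : ℕ}
    (g : Fin n → G) (hg : Function.Injective g) (h : Fin q → G) :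
    (∀ i : Fin q → ℕ,
      (List.ofFn (fun a : Fin q => genMat (K := K) g (h a) (i a))).prod = 0 ↔
        ¬ ∃ k : Fin n, ∀ a : Fin q, ∃ l : Fin n,
            g k * ((List.ofFn h).take (a.1 + 1)).prod = g l) ∧
    (∀ i i' : Fin q → ℕ,
      ((List.ofFn (fun a : Fin q => genMat (K := K) g (h a) (i a))).prod = 0 ↔
        (List.ofFn (fun a : Fin q => genMat (K := K) g (h a) (i' a))).prod = 0)) := by
  have hzero (i : Fin q → ℕ) :
      (List.ofFn (fun a : Fin q => genMat (K := K) g (h a) (i a))).prod = 0 ↔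
        ¬ ∃ k : Fin n, ∀ a : Fin q, ∃ l : Fin n,
            g k * ((List.ofFn h).take (a.1 + 1)).prod = g l := by
    have hmats : List.ofFn (fun a => genMat (K := K) g (h a) (i a)) =
        (List.ofFn fun a => (h a, i a)).map fun p => genMat g p.1 p.2 := by
      rw [List.map_ofFn]; rfl
    have hdegs : (List.ofFn fun a => (h a, i a)).map Prod.fst = List.ofFn h := by
      rw [List.map_ofFn]; rfl
    rw [hmats, list_prod_genMat_eq_zero_iff hg, hdegs]
    simp only [not_exists, PrefixesInRange, List.length_ofFn, Fin.forall_iff]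
  exact ⟨hzero, fun i i' => (hzero i).trans (hzero i').symm⟩

/-- a product of generic matrices of degrees `(h₁, …, h_q)` vanishes iff the set
`L = {k : g k * h₁ ⋯ h_a ∈ {g₁, …, gₙ} for all a}` is empty; in particular vanishing does not
depend on the choice of the indices `i₁, …, i_q`. -/
theorem prod_genMat_eq_zero_iff
    (K : Type*) [Field K] [Infinite K] {G : Type*} [Group G] [DecidableEq G] {n q : ℕ}
    (g : Fin n → G) (hg : Function.Injective g) (h : Fin q → G) :
    (∀ i : Fin q → ℕ,
      (List.ofFn (fun a : Fin q => genMat (K := K) g (h a) (i a))).prod = 0 ↔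
        ¬ ∃ k : Fin n, ∀ a : Fin q, ∃ l : Fin n,
            g k * ((List.ofFn h).take (a.1 + 1)).prod = g l) ∧
    (∀ i i' : Fin q → ℕ,
      ((List.ofFn (fun a : Fin q => genMat (K := K) g (h a) (i a))).prod = 0 ↔
        (List.ofFn (fun a : Fin q => genMat (K := K) g (h a) (i' a))).prod = 0)) :=
  prod_genMat_eq_zero_iff_general K g hg h
end

section
/- Let K be an infinite field, G a finite group of order n, and let (g_1,...,g_n) in G^n with pairwise distinct entries (i.e., an enumeration of G) induce an elementary G-grading of M_n(K). Then no nonzero graded monomial x_{i_1}...x_{i_k} (k >= 1) is a graded polynomial identity of M_n(K). -/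
/-!
Identify `Fin n` with `G` through the enumeration `g`. Right multiplication by `h` is then a
permutation of the indices whose permutation matrix is a sum of matrix units `E_{i,σ i}` with
`g_i⁻¹ g_{σ i} = h`, hence homogeneous of degree `h`. Substituting these invertible matrices into
any monomial gives an invertible, in particular nonzero, product.
-/

namespace Equiv.Perm

variable {ι R : Type*} [DecidableEq ι] [Fintype ι]

theorem permMatrix_eq_sum_single [AddCommMonoid R] [One R] (σ : Perm ι) :
    σ.permMatrix R = ∑ i, Matrix.single i (σ i) 1 := by
  ext a b
  simp [permMatrix, PEquiv.toMatrix_apply, Matrix.sum_apply, Matrix.single_apply, ite_and]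

theorem isUnit_permMatrix [Semiring R] (σ : Perm ι) : IsUnit (σ.permMatrix R) := by
  simpa using (Group.isUnit σ⁻¹).map (Matrix.permMatrixHom (n := ι) (R := R))

end Equiv.Perm

def Equiv.rightShift {ι G : Type*} [Group G] (e : ι ≃ G) (h : G) : Equiv.Perm ι :=
  e.trans ((Equiv.mulRight h).trans e.symm)

@[simp]
theorem Equiv.apply_rightShift {ι G : Type*} [Group G] (e : ι ≃ G) (h : G) (i : ι) :
    e (e.rightShift h i) = e i * h :=
  e.apply_symm_apply _

theorem permMatrix_mem_elemComp (K : Type*) [Field K] {G : Type*} [Group G] {n : ℕ}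
    (g : Fin n → G) {h : G} (σ : Equiv.Perm (Fin n)) (hσ : ∀ i, g (σ i) = g i * h) :
    σ.permMatrix K ∈ elemComp K g h := by
  rw [σ.permMatrix_eq_sum_single]
  refine Submodule.sum_mem _ fun i _ => Submodule.subset_span ⟨i, σ i, ?_, rfl⟩
  rw [hσ, inv_mul_cancel_left]

theorem no_monomial_identity_general
    (K : Type*) [Field K] {G : Type*} [Group G] {n : ℕ}
    (g : Fin n → G) (hg : Function.Bijective g)
    (w : List (G × ℕ)) :
    ∃ v : G × ℕ → Matrix (Fin n) (Fin n) K,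
      (∀ p : G × ℕ, v p ∈ elemComp K g p.1) ∧ (w.map v).prod ≠ 0 := by
  set e : Fin n ≃ G := Equiv.ofBijective g hg
  have : Nonempty (Fin n) := ⟨e.symm 1⟩
  refine ⟨fun p => (e.rightShift p.1).permMatrix K,
    fun p => permMatrix_mem_elemComp K g _ (e.apply_rightShift p.1), ?_⟩
  refine (List.prod_isUnit fun M hM => ?_).ne_zero
  obtain ⟨p, -, rfl⟩ := List.mem_map.1 hM
  exact Equiv.Perm.isUnit_permMatrix _

/-- if `G` has order `n` and `(g₁, …, gₙ)` enumerates `G`, then no nonzero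
graded monomial (encoded by a nonempty word `w` of pairs `(degree, variable index)`) is a
graded identity of `Mₙ(K)`: some graded substitution gives a nonzero product. -/
theorem no_monomial_identity
    (K : Type*) [Field K] [Infinite K] {G : Type*} [Group G] [Fintype G] {n : ℕ}
    (hcard : Fintype.card G = n) (g : Fin n → G) (hg : Function.Bijective g)
    (w : List (G × ℕ)) (hw : w ≠ []) :
    ∃ v : G × ℕ → Matrix (Fin n) (Fin n) K,
      (∀ p : G × ℕ, v p ∈ elemComp K g p.1) ∧ (w.map v).prod ≠ 0 :=
  no_monomial_identity_general K g hg w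
end

section
/- Let K be an infinite field, G a finite group of order n, and let (g_1,...,g_n) enumerate G, inducing an elementary G-grading of M_n(K). Then the T_G-ideal of graded identities of M_n(K) is generated by x_1 x_2 - x_2 x_1 (deg x_1 = deg x_2 = e) and x_1 x_3 x_2 - x_2 x_3 x_1 (e != deg x_1 = deg x_2 = (deg x_3)^{-1}). -/
/-!
Read a word in the variables as a walk on `G`: the letter `x_{h,i}` read at a vertex `y` is an
edge from `y` to `y h`. On generic matrices of the elementary grading, a word takes the value
whose row `i` has a single nonzero entry, the monomial in the edges of its walk from `g i`, in the
column of the endpoint. Over an infinite field a graded identity vanishes on generic matrices, so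
its coefficients sum to zero over every class of words with the same edges and endpoint. Two such
words are congruent modulo the ideal generated by (1) and (2): the generators allow rewriting
`X C Y` as `Y C X` whenever the walks `X` and `Y` join the same two vertices and `C` returns, and
counting the edges that leave the set of vertices visited by a suffix of one word shows that a
single such move brings the first letter of the other word to its front.
-/

/-- The free `G`-graded associative algebra `K⟨X⟩` on variables `x_{h,i}` (the variable
`x_{h,i}` has degree `h`), realized as the monoid algebra of the free monoid on `G × ℕ`. -/
abbrev FreeGr (K : Type*) (G : Type*) [Field K] := MonoidAlgebra K (FreeMonoid (G × ℕ))

/-- Homogeneous component of degree `h` of `K⟨X⟩`. -/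
noncomputable def homComp (K : Type*) [Field K] {G : Type*} [Group G] (h : G) :
    Submodule K (FreeGr K G) :=
  Submodule.span K {x | ∃ w : FreeMonoid (G × ℕ),
    FreeMonoid.lift (fun p : G × ℕ => p.1) w = h ∧
    x = MonoidAlgebra.of K (FreeMonoid (G × ℕ)) w}

/-- The two-sided ideal of `K⟨X⟩` generated by a set `S`. -/
noncomputable def idealSpan {K : Type*} [Field K] {G : Type*} [Group G] (S : Set (FreeGr K G)) :
    Submodule K (FreeGr K G) :=
  Submodule.span K {x | ∃ u s v : FreeGr K G, s ∈ S ∧ x = u * s * v}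

/-- Graded substitution instances of `x₁x₂ - x₂x₁`, `deg x₁ = deg x₂ = ε`. -/
def genSet1 (K : Type*) [Field K] (G : Type*) [Group G] : Set (FreeGr K G) :=
  {x | ∃ a b : FreeGr K G, a ∈ homComp K (1 : G) ∧ b ∈ homComp K (1 : G) ∧
    x = a * b - b * a}

/-- Graded substitution instances of `x₁x₃x₂ - x₂x₃x₁`, `ε ≠ deg x₁ = deg x₂ = (deg x₃)⁻¹`. -/
def genSet2 (K : Type*) [Field K] (G : Type*) [Group G] : Set (FreeGr K G) :=
  {x | ∃ (h : G) (a b c : FreeGr K G), h ≠ 1 ∧ a ∈ homComp K h ∧ b ∈ homComp K h ∧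
    c ∈ homComp K h⁻¹ ∧ x = a * c * b - b * c * a}

/-- The set of graded polynomial identities of `Mₙ(K)` with the elementary grading induced
by `g`. -/
def TGIdeal (K : Type*) [Field K] {G : Type*} [Group G] {n : ℕ} (g : Fin n → G) :
    Set (FreeGr K G) :=
  {f | ∀ v : G × ℕ → Matrix (Fin n) (Fin n) K, (∀ p : G × ℕ, v p ∈ elemComp K g p.1) →
    (MonoidAlgebra.lift K (Matrix (Fin n) (Fin n) K) (FreeMonoid (G × ℕ))
      (FreeMonoid.lift v)) f = 0}

section Walks

variable {G : Type*} [Group G]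

def wordDeg (l : List (G × ℕ)) : G := (l.map Prod.fst).prod

@[simp] lemma wordDeg_nil : wordDeg ([] : List (G × ℕ)) = 1 := rfl

@[simp] lemma wordDeg_cons (p : G × ℕ) (l : List (G × ℕ)) :
    wordDeg (p :: l) = p.1 * wordDeg l := by
  simp [wordDeg]

@[simp] lemma wordDeg_append (l₁ l₂ : List (G × ℕ)) :
    wordDeg (l₁ ++ l₂) = wordDeg l₁ * wordDeg l₂ := by
  simp [wordDeg]

/-- The edges of the walk that reads `l` starting at `x`: the letter `p` read at `y` is the
edge `(p, y)`, leading from `y` to `y * p.1`. -/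
def walk : G → List (G × ℕ) → Multiset ((G × ℕ) × G)
  | _, [] => 0
  | x, p :: l => (p, x) ::ₘ walk (x * p.1) l

@[simp] lemma walk_nil (x : G) : walk x [] = 0 := rfl

@[simp] lemma walk_cons (x : G) (p : G × ℕ) (l : List (G × ℕ)) :
    walk x (p :: l) = (p, x) ::ₘ walk (x * p.1) l := rfl

lemma walk_append (x : G) (l₁ l₂ : List (G × ℕ)) :
    walk x (l₁ ++ l₂) = walk x l₁ + walk (x * wordDeg l₁) l₂ := by
  induction l₁ generalizing x with
  | nil => simp
  | cons p l ih => simp [ih, mul_assoc]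

@[simp] lemma card_walk (x : G) (l : List (G × ℕ)) : Multiset.card (walk x l) = l.length := by
  induction l generalizing x with
  | nil => rfl
  | cons p l ih => simp [ih]

lemma mem_walk_iff {x y : G} {q : G × ℕ} {l : List (G × ℕ)} :
    (q, y) ∈ walk x l ↔ ∃ a b, l = a ++ q :: b ∧ x * wordDeg a = y := by
  induction l generalizing x with
  | nil => simp
  | cons p l ih =>
    simp only [walk_cons, Multiset.mem_cons, Prod.mk.injEq, ih]
    constructor
    · rintro (⟨rfl, rfl⟩ | ⟨a, b, rfl, rfl⟩)
      · exact ⟨[], l, rfl, by simp⟩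
      · exact ⟨p :: a, b, rfl, by simp [mul_assoc]⟩
    · rintro ⟨_ | ⟨p', a⟩, b, hl, rfl⟩
      · obtain ⟨rfl, rfl⟩ := List.cons.inj hl
        exact Or.inl ⟨rfl, by simp⟩
      · obtain ⟨rfl, rfl⟩ := List.cons.inj hl
        exact Or.inr ⟨a, b, rfl, by simp [mul_assoc]⟩

lemma walk_swap (x : G) {X C Y : List (G × ℕ)} (S : List (G × ℕ))
    (hXY : wordDeg X = wordDeg Y) (hC : wordDeg C = (wordDeg X)⁻¹) :
    walk x (X ++ C ++ Y ++ S) = walk x (Y ++ C ++ X ++ S) := by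
  simp only [walk_append, wordDeg_append, hC, ← hXY, mul_inv_cancel, mul_one]
  abel

lemma forall_mem_walk_snd_mem {B : Set G} {μ : Multiset ((G × ℕ) × G)}
    (hB : ∀ e ∈ μ, e.2 ∈ B → e.2 * e.1.1 ∈ B) {l : List (G × ℕ)} {x : G}
    (hx : x ∈ B) (hle : walk x l ≤ μ) : ∀ e ∈ walk x l, e.2 ∈ B := by
  induction l generalizing x with
  | nil => simp
  | cons p l ih =>
    rw [walk_cons] at hle
    have hpx : x * p.1 ∈ B := hB (p, x) (Multiset.mem_of_le hle (Multiset.mem_cons_self _ _)) hx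
    intro e he
    rcases Multiset.mem_cons.mp he with rfl | he
    · exact hx
    · exact ih hpx ((Multiset.le_cons_self _ _).trans hle) e he

lemma exists_common_vertex {x : G} {a b u : List (G × ℕ)} {p : G × ℕ} (ha : a ≠ [])
    (hloop : wordDeg a = 1) (h : walk x (a ++ p :: b) = walk x (p :: u)) :
    ∃ X C Y S, a = X ++ C ∧ p :: b = Y ++ S ∧ Y ≠ [] ∧ wordDeg X = wordDeg Y := by
  classical
  by_contra! hno
  set B : Set G := {y | ∃ Y S, p :: b = Y ++ S ∧ Y ≠ [] ∧ x * wordDeg Y = y}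
  have hA : ∀ X C, a = X ++ C → x * wordDeg X ∉ B := by
    rintro X C rfl ⟨Y, S, hYS, hY, hdeg⟩
    exact hno X C Y S rfl hYS hY (mul_left_cancel hdeg.symm)
  have hx : x ∉ B := by simpa using hA [] a rfl
  have ha_out : ∀ e ∈ walk x a, e.2 ∉ B := by
    rintro ⟨q, y⟩ he
    obtain ⟨X, C, rfl, rfl⟩ := mem_walk_iff.mp he
    exact hA X (q :: C) rfl
  have hsplit : walk x (a ++ p :: b) = walk x a + walk x (p :: b) := by
    rw [walk_append, hloop, mul_one]
  -- Outside `B` start all edges of `a` and the edge `(p, x)`, but on the right only `(p, x)`: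
  -- the walk `u` starts in `B`, and `B` is closed under the common edges.
  have hclosed : ∀ e ∈ walk x (p :: u), e.2 ∈ B → e.2 * e.1.1 ∈ B := by
    rintro ⟨q, y⟩ he hy
    rw [← h, hsplit, Multiset.mem_add] at he
    rcases he with he | he
    · exact absurd hy (ha_out _ he)
    · obtain ⟨Y, S, hYS, rfl⟩ := mem_walk_iff.mp he
      exact ⟨Y ++ [q], S, by simp [hYS], by simp, by simp [mul_assoc]⟩
  have hu_in : ∀ e ∈ walk (x * p.1) u, e.2 ∈ B :=
    forall_mem_walk_snd_mem hclosed ⟨[p], b, rfl, by simp, by simp⟩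
      (Multiset.le_cons_self _ _)
  have hright : (walk x (p :: u)).countP (·.2 ∉ B) = 1 := by
    rw [walk_cons, Multiset.countP_cons, if_pos hx,
      Multiset.countP_eq_zero.mpr fun e he => not_not.mpr (hu_in e he)]
  have hleft : a.length + 1 ≤ (walk x (a ++ p :: b)).countP (·.2 ∉ B) := by
    rw [hsplit, Multiset.countP_add, Multiset.countP_eq_card.mpr ha_out, card_walk, walk_cons,
      Multiset.countP_cons, if_pos hx]
    omega
  have : 0 < a.length := List.length_pos_iff.mpr ha
  rw [h, hright] at hleft
  omega

end Walks

section Congruence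

variable {K : Type*} [Field K] {G : Type*}

variable (K) in
noncomputable def word (l : List (G × ℕ)) : FreeGr K G :=
  MonoidAlgebra.of K _ (FreeMonoid.ofList l)

lemma word_append (l₁ l₂ : List (G × ℕ)) :
    word K (l₁ ++ l₂) = word K l₁ * word K l₂ := by
  simp [word, FreeMonoid.ofList_append]

lemma word_cons (p : G × ℕ) (l : List (G × ℕ)) : word K (p :: l) = word K [p] * word K l :=
  word_append [p] l

variable [Group G]

lemma subset_idealSpan {S : Set (FreeGr K G)} {s : FreeGr K G} (hs : s ∈ S) :
    s ∈ idealSpan S :=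
  Submodule.subset_span ⟨1, s, 1, hs, by rw [one_mul, mul_one]⟩

lemma mul_mul_mem_idealSpan {S : Set (FreeGr K G)} {x : FreeGr K G} (hx : x ∈ idealSpan S)
    (u v : FreeGr K G) : u * x * v ∈ idealSpan S := by
  induction hx using Submodule.span_induction with
  | mem y hy =>
    obtain ⟨u', s, v', hs, rfl⟩ := hy
    exact Submodule.subset_span ⟨u * u', s, v' * v, hs, by noncomm_ring⟩
  | zero => simp
  | add y z _ _ hy hz => simpa [mul_add, add_mul] using add_mem hy hz
  | smul c y _ hy => simpa [mul_smul_comm, smul_mul_assoc] using Submodule.smul_mem _ c hy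

local notation "I" => idealSpan (genSet1 K G ∪ genSet2 K G)

/-- For `h = 1` this is a combination of three instances of `(1)`. -/
lemma mul_mul_sub_mul_mul_mem {h : G} {x y c : FreeGr K G} (hx : x ∈ homComp K h)
    (hy : y ∈ homComp K h) (hc : c ∈ homComp K h⁻¹) : x * c * y - y * c * x ∈ I := by
  rcases eq_or_ne h 1 with rfl | h1
  · rw [inv_one] at hc
    have hcomm : ∀ {a b : FreeGr K G}, a ∈ homComp K 1 → b ∈ homComp K 1 →
        a * b - b * a ∈ I :=
      fun ha hb => subset_idealSpan (Or.inl ⟨_, _, ha, hb, rfl⟩)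
    have e : x * c * y - y * c * x
        = 1 * (x * c - c * x) * y + c * (x * y - y * x) * 1 + 1 * (c * y - y * c) * x := by
      noncomm_ring
    rw [e]
    exact add_mem (add_mem (mul_mul_mem_idealSpan (hcomm hx hc) 1 y)
      (mul_mul_mem_idealSpan (hcomm hx hy) c 1)) (mul_mul_mem_idealSpan (hcomm hc hy) 1 x)
  · exact subset_idealSpan (Or.inr ⟨h, x, y, c, h1, hx, hy, hc, rfl⟩)

lemma word_mem_homComp (l : List (G × ℕ)) : word K l ∈ homComp K (wordDeg l) :=
  Submodule.subset_span ⟨FreeMonoid.ofList l, by rw [FreeMonoid.lift_apply]; rfl, rfl⟩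

lemma word_swap_sub_mem (X C Y S : List (G × ℕ)) (hXY : wordDeg X = wordDeg Y)
    (hC : wordDeg C = (wordDeg X)⁻¹) :
    word K (X ++ C ++ Y ++ S) - word K (Y ++ C ++ X ++ S) ∈ I := by
  have hY := word_mem_homComp (K := K) Y
  have hC' := word_mem_homComp (K := K) C
  rw [← hXY] at hY
  rw [hC] at hC'
  have := mul_mul_mem_idealSpan (mul_mul_sub_mul_mul_mem (word_mem_homComp X) hY hC') 1 (word K S)
  simpa only [word_append, one_mul, sub_mul] using this

lemma exists_sub_word_cons_mem {x : G} {l u : List (G × ℕ)} {p : G × ℕ}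
    (h : walk x l = walk x (p :: u)) :
    ∃ t, word K l - word K (p :: t) ∈ I ∧ walk x l = walk x (p :: t) ∧
      wordDeg l = wordDeg (p :: t) := by
  have hpx : (p, x) ∈ walk x l := by rw [h, walk_cons]; exact Multiset.mem_cons_self _ _
  obtain ⟨a, b, rfl, hloop⟩ := mem_walk_iff.mp hpx
  replace hloop : wordDeg a = 1 := mul_eq_left.mp hloop
  rcases eq_or_ne a [] with rfl | ha
  · exact ⟨b, by simp, rfl, rfl⟩
  obtain ⟨X, C, Y, S, rfl, hYS, hY, hXY⟩ := exists_common_vertex ha hloop h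
  obtain ⟨q, Y', rfl⟩ := List.exists_cons_of_ne_nil hY
  obtain ⟨rfl, rfl⟩ := List.cons.inj hYS
  have hC : wordDeg C = (wordDeg X)⁻¹ :=
    eq_inv_of_mul_eq_one_right (by rwa [← wordDeg_append])
  refine ⟨Y' ++ C ++ X ++ S, ?_, ?_, ?_⟩
  · simpa using word_swap_sub_mem (K := K) X C (p :: Y') S hXY hC
  · simpa using walk_swap x S hXY hC
  · simp [hC]

theorem word_sub_word_mem_of_walk_eq {x : G} {l l' : List (G × ℕ)}
    (hw : walk x l = walk x l') (hd : wordDeg l = wordDeg l') : word K l - word K l' ∈ I := by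
  induction l' generalizing l x with
  | nil =>
    obtain rfl : l = [] := List.length_eq_zero_iff.mp (by simpa using congrArg Multiset.card hw)
    simp
  | cons p u ih =>
    obtain ⟨t, hlt, hwt, hdt⟩ := exists_sub_word_cons_mem (K := K) hw
    have htu : word K t - word K u ∈ I := by
      refine ih (x := x * p.1) ?_ ?_
      · simpa using hwt.symm.trans hw
      · simpa using hdt.symm.trans hd
    have := add_mem hlt (mul_mul_mem_idealSpan htu (word K [p]) 1)
    rwa [mul_one, mul_sub, ← word_cons, ← word_cons, sub_add_sub_cancel] at this

end Congruence

section ElementaryGrading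

variable {K : Type*} [Field K] {G : Type*} [Group G] {n : ℕ} (g : Fin n → G)

lemma mem_elemComp_iff {h : G} {M : Matrix (Fin n) (Fin n) K} :
    M ∈ elemComp K g h ↔ ∀ i j, (g i)⁻¹ * g j ≠ h → M i j = 0 := by
  constructor
  · intro hM
    induction hM using Submodule.span_induction with
    | mem M hM =>
      obtain ⟨i, j, hij, rfl⟩ := hM
      intro a b hab
      rw [Matrix.single_apply, if_neg]
      rintro ⟨rfl, rfl⟩
      exact hab hij
    | zero => simp
    | add M N _ _ hM hN => intro i j hij; simp [hM i j hij, hN i j hij]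
    | smul c M _ hM => intro i j hij; simp [hM i j hij]
  · intro hM
    rw [Matrix.matrix_eq_sum_single M]
    refine Submodule.sum_mem _ fun i _ => Submodule.sum_mem _ fun j _ => ?_
    by_cases hij : (g i)⁻¹ * g j = h
    · rw [← mul_one (M i j), ← smul_eq_mul, ← Matrix.smul_single]
      exact Submodule.smul_mem _ _ (Submodule.subset_span ⟨i, j, hij, rfl⟩)
    · rw [hM i j hij, Matrix.single_zero]
      exact zero_mem _

lemma one_mem_elemComp : (1 : Matrix (Fin n) (Fin n) K) ∈ elemComp K g 1 :=
  (mem_elemComp_iff g).mpr fun i j hij =>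
    Matrix.one_apply_ne fun h => hij (by rw [h, inv_mul_cancel])

lemma mul_mem_elemComp {h₁ h₂ : G} {M N : Matrix (Fin n) (Fin n) K}
    (hM : M ∈ elemComp K g h₁) (hN : N ∈ elemComp K g h₂) :
    M * N ∈ elemComp K g (h₁ * h₂) := by
  rw [mem_elemComp_iff] at hM hN ⊢
  intro i j hij
  rw [Matrix.mul_apply]
  refine Finset.sum_eq_zero fun k _ => ?_
  by_cases hik : (g i)⁻¹ * g k = h₁
  · rw [hN k j fun hkj => hij (by rw [← hik, ← hkj]; group), mul_zero]
  · rw [hM i k hik, zero_mul]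

lemma lift_mem_elemComp {v : G × ℕ → Matrix (Fin n) (Fin n) K}
    (hv : ∀ p : G × ℕ, v p ∈ elemComp K g p.1) {h : G} {f : FreeGr K G}
    (hf : f ∈ homComp K h) :
    MonoidAlgebra.lift K _ _ (FreeMonoid.lift v) f ∈ elemComp K g h := by
  have hword (w : FreeMonoid (G × ℕ)) :
      FreeMonoid.lift v w ∈ elemComp K g (FreeMonoid.lift Prod.fst w) := by
    induction w using FreeMonoid.inductionOn' with
    | one => simpa using one_mem_elemComp g
    | of_mul p w ih => simpa using mul_mem_elemComp g (hv p) ih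
  induction hf using Submodule.span_induction with
  | mem f hf =>
    obtain ⟨w, rfl, rfl⟩ := hf
    rw [MonoidAlgebra.lift_of]
    exact hword w
  | zero => simp
  | add a b _ _ ha hb => rw [map_add]; exact add_mem ha hb
  | smul c a _ ha => rw [map_smul]; exact Submodule.smul_mem _ c ha

lemma eq_diagonal_of_mem_elemComp_one (hg : Function.Injective g)
    {M : Matrix (Fin n) (Fin n) K} (hM : M ∈ elemComp K g 1) : M = Matrix.diagonal M.diag := by
  ext i j
  rcases eq_or_ne i j with rfl | hij
  · simp
  · rw [Matrix.diagonal_apply_ne _ hij,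
      (mem_elemComp_iff g).mp hM i j fun h => hij (hg (inv_mul_eq_one.mp h))]

lemma mul_comm_of_mem_elemComp_one (hg : Function.Injective g) {M N : Matrix (Fin n) (Fin n) K}
    (hM : M ∈ elemComp K g 1) (hN : N ∈ elemComp K g 1) : M * N = N * M := by
  rw [eq_diagonal_of_mem_elemComp_one g hg hM, eq_diagonal_of_mem_elemComp_one g hg hN,
    Matrix.diagonal_mul_diagonal, Matrix.diagonal_mul_diagonal]
  simp only [mul_comm]

noncomputable def next (hg : Function.Bijective g) (h : G) (i : Fin n) : Fin n :=
  (Equiv.ofBijective g hg).symm (g i * h)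

lemma g_next (hg : Function.Bijective g) (h : G) (i : Fin n) : g (next g hg h i) = g i * h :=
  Equiv.ofBijective_apply_symm_apply g hg _

lemma eq_next_iff (hg : Function.Bijective g) {h : G} {i j : Fin n} :
    j = next g hg h i ↔ (g i)⁻¹ * g j = h := by
  rw [inv_mul_eq_iff_eq_mul, ← g_next g hg, hg.injective.eq_iff]

lemma mul_mul_comm_of_mem_elemComp (hg : Function.Bijective g) {h : G}
    {a b c : Matrix (Fin n) (Fin n) K}
    (ha : a ∈ elemComp K g h) (hb : b ∈ elemComp K g h) (hc : c ∈ elemComp K g h⁻¹) :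
    a * c * b = b * c * a := by
  have hcol {M : Matrix (Fin n) (Fin n) K} (hM : M ∈ elemComp K g h) (i j : Fin n)
      (hj : j ≠ next g hg h i) : M i j = 0 :=
    (mem_elemComp_iff g).mp hM i j fun e => hj ((eq_next_iff g hg).mpr e)
  have hdiag {M : Matrix (Fin n) (Fin n) K} (hM : M ∈ elemComp K g h) (i : Fin n) :
      (M * c) i i = M i (next g hg h i) * c (next g hg h i) i := by
    rw [Matrix.mul_apply]
    exact Finset.sum_eq_single _ (fun k _ hk => by rw [hcol hM i k hk, zero_mul]) (by simp)
  have hac := eq_diagonal_of_mem_elemComp_one g hg.injective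
    (by simpa using mul_mem_elemComp g ha hc)
  have hbc := eq_diagonal_of_mem_elemComp_one g hg.injective
    (by simpa using mul_mem_elemComp g hb hc)
  ext i j
  rw [hac, hbc, Matrix.diagonal_mul, Matrix.diagonal_mul, Matrix.diag_apply, Matrix.diag_apply,
    hdiag ha, hdiag hb]
  rcases eq_or_ne j (next g hg h i) with rfl | hj
  · ring
  · rw [hcol ha i j hj, hcol hb i j hj]
    ring

theorem idealSpan_subset_TGIdeal (hg : Function.Bijective g) :
    (idealSpan (genSet1 K G ∪ genSet2 K G) : Set (FreeGr K G)) ⊆ TGIdeal K g := by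
  intro f hf v hv
  induction hf using Submodule.span_induction with
  | mem x hx =>
    obtain ⟨u, s, w, hs, rfl⟩ := hx
    suffices MonoidAlgebra.lift K _ _ (FreeMonoid.lift v) s = 0 by simp [this]
    rcases hs with ⟨a, b, ha, hb, rfl⟩ | ⟨h, a, b, c, -, ha, hb, hc, rfl⟩
    · rw [map_sub, map_mul, map_mul, sub_eq_zero]
      exact mul_comm_of_mem_elemComp_one g hg.injective (lift_mem_elemComp g hv ha)
        (lift_mem_elemComp g hv hb)
    · rw [map_sub, map_mul, map_mul, map_mul, map_mul, sub_eq_zero]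
      exact mul_mul_comm_of_mem_elemComp g hg (lift_mem_elemComp g hv ha)
        (lift_mem_elemComp g hv hb) (lift_mem_elemComp g hv hc)
  | zero => simp
  | add x y _ _ hx hy => rw [map_add, hx, hy, add_zero]
  | smul r x _ hx => rw [map_smul, hx, smul_zero]

end ElementaryGrading

lemma MvPolynomial.prod_map_X_eq_monomial {σ R : Type*} [CommSemiring R] [DecidableEq σ]
    (m : Multiset σ) : (m.map X).prod = monomial (R := R) m.toFinsupp 1 := by
  induction m using Multiset.induction with
  | empty => simp
  | cons a m ih =>
    rw [Multiset.map_cons, Multiset.prod_cons, ih, ← Multiset.singleton_add, map_add,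
      Multiset.toFinsupp_singleton, X, monomial_mul, one_mul]

section GenericMatrices

variable {K : Type*} [Field K] {G : Type*} [Group G] {n : ℕ} (g : Fin n → G)
  (hg : Function.Bijective g)

lemma next_one (i : Fin n) : next g hg 1 i = i :=
  ((eq_next_iff g hg).mpr (inv_mul_cancel _)).symm

lemma next_next (h₁ h₂ : G) (i : Fin n) :
    next g hg h₂ (next g hg h₁ i) = next g hg (h₁ * h₂) i :=
  (eq_next_iff g hg).mpr (by rw [g_next g hg, g_next g hg]; group)

noncomputable def genericMatrix {A : Type*} [Semiring A] (t : (G × ℕ) × G → A)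
    (p : G × ℕ) : Matrix (Fin n) (Fin n) A :=
  Matrix.of fun i j => if j = next g hg p.1 i then t (p, g i) else 0

lemma genericMatrix_mem_elemComp (t : (G × ℕ) × G → K) (p : G × ℕ) :
    genericMatrix g hg t p ∈ elemComp K g p.1 :=
  (mem_elemComp_iff g).mpr fun _ _ hij => if_neg fun hj => hij ((eq_next_iff g hg).mp hj)

lemma list_prod_genericMatrix_apply {A : Type*} [CommSemiring A] (t : (G × ℕ) × G → A)
    (l : List (G × ℕ)) (i j : Fin n) :
    (l.map (genericMatrix g hg t)).prod i j =
      if j = next g hg (wordDeg l) i then ((walk (g i) l).map t).prod else 0 := by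
  induction l generalizing i with
  | nil => simp [Matrix.one_apply, next_one, eq_comm]
  | cons p l ih =>
    rw [List.map_cons, List.prod_cons, Matrix.mul_apply,
      Finset.sum_eq_single (next g hg p.1 i) (fun k _ hk => by simp [genericMatrix, hk])
        (by simp)]
    simp [genericMatrix, ih, g_next, next_next]

noncomputable def genericEval :
    FreeGr K G →ₐ[K] Matrix (Fin n) (Fin n) (MvPolynomial ((G × ℕ) × G) K) :=
  MonoidAlgebra.lift K _ _ (FreeMonoid.lift (genericMatrix g hg MvPolynomial.X))

lemma genericEval_word_apply [DecidableEq G] (l : List (G × ℕ)) (i j : Fin n) :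
    genericEval g hg (word K l) i j =
      if j = next g hg (wordDeg l) i then MvPolynomial.monomial (walk (g i) l).toFinsupp 1
      else 0 := by
  rw [genericEval, word, MonoidAlgebra.lift_of, FreeMonoid.lift_apply, FreeMonoid.toList_ofList,
    list_prod_genericMatrix_apply, MvPolynomial.prod_map_X_eq_monomial]

lemma mapMatrix_aeval_comp_genericEval (t : (G × ℕ) × G → K) :
    (MvPolynomial.aeval t).mapMatrix.comp (genericEval g hg) =
      MonoidAlgebra.lift K _ _ (FreeMonoid.lift (genericMatrix g hg t)) := by
  rw [MonoidAlgebra.lift_unique' (AlgHom.comp _ _)]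
  congr 1
  refine FreeMonoid.hom_eq fun p => ?_
  ext i j
  by_cases hj : j = next g hg p.1 i <;> simp [genericEval, genericMatrix, hj]

lemma genericEval_eq_zero_of_mem_TGIdeal [Infinite K] {f : FreeGr K G} (hf : f ∈ TGIdeal K g) :
    genericEval g hg f = 0 := by
  refine Matrix.ext fun i j => MvPolynomial.funext fun t => ?_
  have := congrArg (· i j) (hf _ (genericMatrix_mem_elemComp g hg t))
  rw [← mapMatrix_aeval_comp_genericEval] at this
  simpa [MvPolynomial.coe_aeval_eq_eval] using this

lemma coeff_genericEval_apply [DecidableEq G] (f : FreeGr K G) (μ : Multiset ((G × ℕ) × G))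
    (h : G) (i : Fin n) :
    MvPolynomial.coeff μ.toFinsupp (genericEval g hg f i (next g hg h i)) =
      ∑ w ∈ f.coeff.support with (walk (g i) w.toList, wordDeg w.toList) = (μ, h),
        f.coeff w := by
  conv_lhs => rw [← f.sum_coeff_single]
  rw [Finsupp.sum, map_sum, Matrix.sum_apply, MvPolynomial.coeff_sum, Finset.sum_filter]
  refine Finset.sum_congr rfl fun w _ => ?_
  have hw : MonoidAlgebra.single w (f.coeff w) = f.coeff w • word K w.toList := by
    simp [word]
  rw [hw, map_smul, Matrix.smul_apply, genericEval_word_apply, MvPolynomial.coeff_smul]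
  simp only [eq_next_iff, g_next, inv_mul_cancel_left]
  by_cases hd : h = wordDeg w.toList <;> simp [hd, MvPolynomial.coeff_monomial, eq_comm]

end GenericMatrices

lemma MonoidAlgebra.mem_of_sum_fiber_eq_zero {R M C : Type*} [Ring R] [DecidableEq C] (κ : M → C)
    {L : Submodule R (MonoidAlgebra R M)}
    (hL : ∀ m m', κ m = κ m' → single m 1 - single m' 1 ∈ L) {f : MonoidAlgebra R M}
    (hf : ∀ c, ∑ m ∈ f.coeff.support with κ m = c, f.coeff m = 0) : f ∈ L := by
  classical
  rw [← f.sum_coeff_single, Finsupp.sum,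
    ← Finset.sum_fiberwise_of_maps_to fun m hm => Finset.mem_image_of_mem κ hm]
  refine Submodule.sum_mem _ fun c hc => ?_
  obtain ⟨m₀, -, rfl⟩ := Finset.mem_image.mp hc
  have hsum : ∑ m ∈ f.coeff.support with κ m = κ m₀, single m (f.coeff m) =
      ∑ m ∈ f.coeff.support with κ m = κ m₀, f.coeff m • (single m 1 - single m₀ 1) := by
    rw [← sub_zero (∑ m ∈ _ with _, single m _), ← zero_smul R (single m₀ (1 : R)),
      ← hf (κ m₀)]
    simp only [smul_sub, Finset.sum_sub_distrib, Finset.sum_smul, smul_single', mul_one]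
  rw [hsum]
  exact Submodule.sum_mem _ fun m hm =>
    Submodule.smul_mem _ _ (hL m m₀ (Finset.mem_filter.mp hm).2)

theorem graded_identities_basis_card_eq_general
    (K : Type*) [Field K] [Infinite K] {G : Type*} [Group G] {n : ℕ}
    (g : Fin n → G) (hg : Function.Bijective g) :
    TGIdeal K g = ↑(idealSpan (genSet1 K G ∪ genSet2 K G)) := by
  classical
  refine Set.Subset.antisymm (fun f hf => ?_) (idealSpan_subset_TGIdeal g hg)
  obtain ⟨i, -⟩ := hg.surjective 1
  refine MonoidAlgebra.mem_of_sum_fiber_eq_zero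
    (fun w => (walk (g i) w.toList, wordDeg w.toList)) (fun w w' hww' => ?_) fun ⟨μ, h⟩ => ?_
  · obtain ⟨hw, hd⟩ := Prod.ext_iff.mp hww'
    simpa [word] using word_sub_word_mem_of_walk_eq (K := K) hw hd
  · rw [← coeff_genericEval_apply g hg f μ h i, genericEval_eq_zero_of_mem_TGIdeal g hg hf]
    rfl

/-- if `K` is infinite, `G` is a group of order `n`, and `(g₁, …, gₙ)`
enumerates `G`, then the graded identities of `Mₙ(K)` are generated, as a `T_G`-ideal, by
the identities (1) and (2). -/
theorem graded_identities_basis_card_eq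
    (K : Type*) [Field K] [Infinite K] {G : Type*} [Group G] [Fintype G] {n : ℕ}
    (hcard : Fintype.card G = n) (g : Fin n → G) (hg : Function.Bijective g) :
    TGIdeal K g = ↑(idealSpan (genSet1 K G ∪ genSet2 K G)) :=
  graded_identities_basis_card_eq_general K g hg
end

section
/- For a G-grading of M_n(K) all of whose matrix units E_{ij} are homogeneous, the grading is elementary: there exists an n-tuple (g_1,...,g_n) in G^n such that each E_{ij} is homogeneous of degree g_i^{-1} g_j. -/
/-! If `E i j` has degree `d i j`, then `E i j * E j k = E i k ≠ 0` forces
`d i j * d j k = d i k`, since a nonzero element lies in at most one component of a direct sum.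
Such a cocycle `d` is a coboundary: `g i = d z i` works for any fixed index `z`. -/

theorem Matrix.single_ne_zero {m n α : Type*} [DecidableEq m] [DecidableEq n] [Zero α]
    (i : m) (j : n) {c : α} (hc : c ≠ 0) : Matrix.single i j c ≠ 0 :=
  fun h => hc (by simpa using congrFun (congrFun h i) j)

theorem DirectSum.IsInternal.eq_of_mem_of_mem {ι R M : Type*} [DecidableEq ι] [Semiring R]
    [AddCommMonoid M] [Module R M] {𝒜 : ι → Submodule R M} (h : DirectSum.IsInternal 𝒜)
    {a b : ι} {x : M} (hx : x ≠ 0) (ha : x ∈ 𝒜 a) (hb : x ∈ 𝒜 b) : a = b := by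
  by_contra hab
  exact hx (Submodule.disjoint_def.mp (h.submodule_iSupIndep.pairwiseDisjoint hab) x ha hb)

theorem exists_eq_inv_mul_of_mul_eq {ι G : Type*} [Group G] (d : ι → ι → G)
    (hd : ∀ i j k, d i j * d j k = d i k) :
    ∃ g : ι → G, ∀ i j, d i j = (g i)⁻¹ * g j := by
  rcases isEmpty_or_nonempty ι with _ | ⟨⟨z⟩⟩
  · exact ⟨isEmptyElim, isEmptyElim⟩
  · exact ⟨d z, fun i j => by rw [← hd z i j, inv_mul_cancel_left]⟩

/-- for a `G`-grading `𝒜` of `Mₙ(K)` (a direct sum decomposition into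
subspaces with `𝒜 a * 𝒜 b ⊆ 𝒜 (a * b)`) in which every matrix unit is homogeneous, the
grading is elementary: there is a tuple `(g₁, …, gₙ)` such that `E i j` is homogeneous of
degree `(g i)⁻¹ * g j`. -/
theorem grading_elementary_of_matrix_units_homogeneous
    (K : Type*) [Field K] {G : Type*} [Group G] [DecidableEq G] {n : ℕ}
    (𝒜 : G → Submodule K (Matrix (Fin n) (Fin n) K))
    (hdecomp : DirectSum.IsInternal 𝒜)
    (hmul : ∀ a b : G, ∀ x ∈ 𝒜 a, ∀ y ∈ 𝒜 b, x * y ∈ 𝒜 (a * b))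
    (hunits : ∀ i j : Fin n, ∃ h : G, Matrix.single i j (1 : K) ∈ 𝒜 h) :
    ∃ g : Fin n → G, ∀ i j : Fin n,
      Matrix.single i j (1 : K) ∈ 𝒜 ((g i)⁻¹ * g j) := by
  choose d hd using hunits
  have hcocycle : ∀ i j k, d i j * d j k = d i k := fun i j k => by
    have hprod : Matrix.single i k (1 : K) ∈ 𝒜 (d i j * d j k) := by
      simpa [Matrix.single_mul_single_same] using hmul _ _ _ (hd i j) _ (hd j k)
    exact hdecomp.eq_of_mem_of_mem (Matrix.single_ne_zero i k one_ne_zero) hprod (hd i k)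
  obtain ⟨g, hg⟩ := exists_eq_inv_mul_of_mul_eq d hcocycle
  exact ⟨g, fun i j => hg i j ▸ hd i j⟩
end

section
/- Let m and n be multilinear graded monomials in distinct variables x_1,...,x_q whose generic matrix evaluations m(A_1,...,A_q) and n(A_1,...,A_q) have the same nonzero entry in the same position. If additionally m and n begin with the same variable, then writing m = x_{i_1} m' and n = x_{i_1} n', the evaluations m'(A_1,...,A_q) and n'(A_1,...,A_q) have the same nonzero entry in the same position, and the degree (in G) of m equals the degree of n. -/
/-- Evaluation of the graded monomial encoded by the word `w` (letters `(h, i)` standing for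
the `i`-th variable of degree `h`) at the generic matrices. -/
noncomputable def evalWord (K : Type*) [Field K] {G : Type*} [Group G] [DecidableEq G] {n : ℕ}
    (g : Fin n → G) (w : List (G × ℕ)) :
    Matrix (Fin n) (Fin n) (MvPolynomial (G × ℕ × Fin n) K) :=
  (w.map fun p => genMat (K := K) g p.1 p.2).prod

open MvPolynomial

section GenericMatrices

variable {K : Type*} [Field K] {G : Type*} [Group G] [DecidableEq G] {n : ℕ} {g : Fin n → G}

lemma evalWord_cons_apply (p : G × ℕ) (w : List (G × ℕ)) (k l : Fin n) :
    evalWord K g (p :: w) k l =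
      ∑ j, (if g k * p.1 = g j then X (p.1, p.2, k) else 0) * evalWord K g w j l := by
  simp [evalWord, Matrix.mul_apply, genMat]

lemma evalWord_cons_apply_of_mul_eq (hg : Function.Injective g) (p : G × ℕ)
    (w : List (G × ℕ)) {k l j : Fin n} (hj : g k * p.1 = g j) :
    evalWord K g (p :: w) k l = X (p.1, p.2, k) * evalWord K g w j l := by
  rw [evalWord_cons_apply, Finset.sum_eq_single j]
  · rw [if_pos hj]
  · intro b _ hb
    rw [if_neg fun hc => hb (hg (hc.symm.trans hj)), zero_mul]
  · simp

lemma exists_mul_eq_of_evalWord_cons_apply_ne_zero {p : G × ℕ} {w : List (G × ℕ)}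
    {k l : Fin n} (h : evalWord K g (p :: w) k l ≠ 0) :
    ∃ j, g k * p.1 = g j ∧ evalWord K g w j l ≠ 0 := by
  rw [evalWord_cons_apply] at h
  obtain ⟨j, -, hj⟩ := Finset.exists_ne_zero_of_sum_ne_zero h
  by_cases hkj : g k * p.1 = g j
  · exact ⟨j, hkj, right_ne_zero_of_mul hj⟩
  · simp [hkj] at hj

lemma mul_prod_eq_of_evalWord_apply_ne_zero (w : List (G × ℕ)) {k l : Fin n}
    (h : evalWord K g w k l ≠ 0) : g k * (w.map Prod.fst).prod = g l := by
  induction w generalizing k with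
  | nil =>
    by_cases hkl : k = l
    · simp [hkl]
    · simp [evalWord, Matrix.one_apply_ne hkl] at h
  | cons p w ih =>
    obtain ⟨j, hkj, hj⟩ := exists_mul_eq_of_evalWord_cons_apply_ne_zero h
    rw [List.map_cons, List.prod_cons, ← mul_assoc, hkj, ih hj]

end GenericMatrices

theorem tail_same_entry_and_same_degree_general
    (K : Type*) [Field K] {G : Type*} [Group G] [DecidableEq G] {n : ℕ}
    (g : Fin n → G) (hg : Function.Injective g)
    (p : G × ℕ) (m' n' : List (G × ℕ))
    (hexists : ∃ k l : Fin n,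
      evalWord K g (p :: m') k l = evalWord K g (p :: n') k l ∧
      evalWord K g (p :: m') k l ≠ 0) :
    (∃ k l : Fin n,
      evalWord K g m' k l = evalWord K g n' k l ∧ evalWord K g m' k l ≠ 0) ∧
    ((p :: m').map Prod.fst).prod = ((p :: n').map Prod.fst).prod := by
  obtain ⟨k, l, heq, hne⟩ := hexists
  obtain ⟨j, hkj, hm'⟩ := exists_mul_eq_of_evalWord_cons_apply_ne_zero hne
  have htail : evalWord K g m' j l = evalWord K g n' j l := by
    refine mul_left_cancel₀ (X_ne_zero (p.1, p.2, k)) ?_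
    rw [← evalWord_cons_apply_of_mul_eq hg p m' hkj, ← evalWord_cons_apply_of_mul_eq hg p n' hkj,
      heq]
  have hdeg_m := mul_prod_eq_of_evalWord_apply_ne_zero (p :: m') hne
  have hdeg_n := mul_prod_eq_of_evalWord_apply_ne_zero (p :: n') (heq ▸ hne)
  exact ⟨⟨j, l, htail, hm'⟩, mul_left_cancel (hdeg_m.trans hdeg_n.symm)⟩

/-- let `m = x_{i₁} m'` and `n = x_{i₁} n'` be multilinear graded monomials
(words with pairwise distinct variable indices) beginning with the same variable, whose
generic-matrix evaluations share the same nonzero entry in the same position. Then the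
evaluations of the tails `m'` and `n'` also share a common nonzero entry, and the `G`-degrees
of `m` and `n` coincide. -/
theorem tail_same_entry_and_same_degree
    (K : Type*) [Field K] [Infinite K] {G : Type*} [Group G] [DecidableEq G] {n : ℕ}
    (g : Fin n → G) (hg : Function.Injective g)
    (p : G × ℕ) (m' n' : List (G × ℕ))
    (hm : ((p :: m').map Prod.snd).Nodup) (hn : ((p :: n').map Prod.snd).Nodup)
    (hexists : ∃ k l : Fin n,
      evalWord K g (p :: m') k l = evalWord K g (p :: n') k l ∧
      evalWord K g (p :: m') k l ≠ 0) :
    (∃ k l : Fin n,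
      evalWord K g m' k l = evalWord K g n' k l ∧ evalWord K g m' k l ≠ 0) ∧
    ((p :: m').map Prod.fst).prod = ((p :: n').map Prod.fst).prod :=
  tail_same_entry_and_same_degree_general K g hg p m' n' hexists
end
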